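/- arXiv:2404.19507 — 2 statements merged into one kernel-verified Lean document; each statement's English description precedes it below -/
import Mathlib

section
/- Let p₀ ∈ (0,1), let q ∈ [1/2, 1), and let λ₁, …, λₙ be positive reals with (1−q)/q ≤ λᵢ ≤ q/(1−q) for every i. Define T_λ(p) = p/(p + (1−p)·λ) and let pₙ = T_{λₙ}(⋯(T_{λ₁}(p₀))⋯) be the posterior after the n updates. Then (p₀·(1−q)ⁿ)/(p₀·(1−q)ⁿ + (1−p₀)·qⁿ) ≤ pₙ ≤ (p₀·qⁿ)/(p₀·qⁿ + (1−p₀)·(1−q)ⁿ). That is, if every signal of every consulted consultant has conditional probability of the correct state at most q, the posterior after n consultations lies between these two bounds. -/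
/-!
Bayesian updating is multiplicative in the likelihood ratio: updating by `l` and then by `m`
is the single update by `l * m`, so the posterior after the signals `L` is the update of `p₀` by
`L.prod`. The update is antitone in the ratio, and `L.prod` lies between `((1-q)/q)ⁿ` and
`(q/(1-q))ⁿ`; updating by these extreme ratios gives exactly the two bounds.
-/

/-- Bayesian update with likelihood ratio `λ`. -/
noncomputable def bayesUpdate (l p : ℝ) : ℝ := p / (p + (1 - p) * l)

section ListProd

variable {R : Type*} [CommMonoidWithZero R] [PartialOrder R] [ZeroLEOneClass R] [PosMulMono R]

theorem List.pow_length_le_prod {L : List R} {a : R} (ha : 0 ≤ a) (h : ∀ l ∈ L, a ≤ l) :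
    a ^ L.length ≤ L.prod := by
  simpa [List.map_const', List.prod_replicate] using
    List.prod_map_le_prod_map₀ (fun _ => a) id (fun _ _ => ha) h

theorem List.prod_le_pow_length {L : List R} {b : R} (h0 : ∀ l ∈ L, 0 ≤ l)
    (h : ∀ l ∈ L, l ≤ b) : L.prod ≤ b ^ L.length := by
  simpa [List.map_const', List.prod_replicate] using
    List.prod_map_le_prod_map₀ id (fun _ => b) h0 h

end ListProd

section BayesUpdate

variable {l m p : ℝ}

theorem bayesUpdate_denom_pos (hp : p ∈ Set.Icc (0 : ℝ) 1) (hl : 0 < l) :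
    0 < p + (1 - p) * l := by
  obtain ⟨hp0, hp1⟩ := hp
  rcases hp0.eq_or_lt with rfl | hp0
  · simpa using hl
  · nlinarith

theorem bayesUpdate_mem_Icc (hp : p ∈ Set.Icc (0 : ℝ) 1) (hl : 0 < l) :
    bayesUpdate l p ∈ Set.Icc (0 : ℝ) 1 := by
  have hd := bayesUpdate_denom_pos hp hl
  obtain ⟨hp0, hp1⟩ := hp
  refine ⟨div_nonneg hp0 hd.le, (div_le_one hd).2 ?_⟩
  nlinarith

theorem bayesUpdate_one (p : ℝ) : bayesUpdate 1 p = p := by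
  simp [bayesUpdate]

theorem bayesUpdate_bayesUpdate (hd : p + (1 - p) * l ≠ 0) :
    bayesUpdate m (bayesUpdate l p) = bayesUpdate (l * m) p := by
  unfold bayesUpdate
  field_simp
  ring

theorem foldl_bayesUpdate_eq_bayesUpdate_prod (L : List ℝ) (hL : ∀ l ∈ L, 0 < l)
    (hp : p ∈ Set.Icc (0 : ℝ) 1) :
    L.foldl (fun p l => bayesUpdate l p) p = bayesUpdate L.prod p := by
  induction L generalizing p with
  | nil => exact (bayesUpdate_one p).symm
  | cons l L ih =>
    have hl : 0 < l := hL l List.mem_cons_self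
    rw [List.foldl_cons,
      ih (fun x hx => hL x (List.mem_cons_of_mem l hx)) (bayesUpdate_mem_Icc hp hl),
      bayesUpdate_bayesUpdate (bayesUpdate_denom_pos hp hl).ne', List.prod_cons]

theorem bayesUpdate_anti_left (hp : p ∈ Set.Icc (0 : ℝ) 1) (hl : 0 < l) (hlm : l ≤ m) :
    bayesUpdate m p ≤ bayesUpdate l p := by
  apply div_le_div_of_nonneg_left hp.1 (bayesUpdate_denom_pos hp hl)
  nlinarith [hp.2]

theorem bayesUpdate_div {a : ℝ} (b : ℝ) (ha : a ≠ 0) :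
    bayesUpdate (b / a) p = p * a / (p * a + (1 - p) * b) := by
  rw [bayesUpdate, mul_div_assoc', add_div' _ _ _ ha, div_div_eq_mul_div]

end BayesUpdate

/-- Posterior bounds for non-revealing consultants (central estimate of Theorem 4.2):
if every consulted signal has likelihood ratio in `[(1-q)/q, q/(1-q)]`, then the
posterior after `n` consultations lies between
`p₀(1-q)ⁿ / (p₀(1-q)ⁿ + (1-p₀)qⁿ)` and `p₀qⁿ / (p₀qⁿ + (1-p₀)(1-q)ⁿ)`. -/
theorem posterior_bounds (p₀ q : ℝ) (hp : p₀ ∈ Set.Ioo (0:ℝ) 1)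
    (hq : q ∈ Set.Ico (1/2 : ℝ) 1) (L : List ℝ)
    (hL : ∀ l ∈ L, (1 - q) / q ≤ l ∧ l ≤ q / (1 - q)) :
    p₀ * (1 - q) ^ L.length / (p₀ * (1 - q) ^ L.length + (1 - p₀) * q ^ L.length)
        ≤ L.foldl (fun p l => bayesUpdate l p) p₀ ∧
    L.foldl (fun p l => bayesUpdate l p) p₀
        ≤ p₀ * q ^ L.length / (p₀ * q ^ L.length + (1 - p₀) * (1 - q) ^ L.length) := by
  have hq0 : 0 < q := by linarith [hq.1]
  have h1q : 0 < 1 - q := by linarith [hq.2]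
  have hp' : p₀ ∈ Set.Icc (0 : ℝ) 1 := Set.Ioo_subset_Icc_self hp
  have hLpos : ∀ l ∈ L, 0 < l := fun l hl => (div_pos h1q hq0).trans_le (hL l hl).1
  have hlow : ((1 - q) / q) ^ L.length ≤ L.prod :=
    List.pow_length_le_prod (div_pos h1q hq0).le fun l hl => (hL l hl).1
  have hhigh : L.prod ≤ (q / (1 - q)) ^ L.length :=
    List.prod_le_pow_length (fun l hl => (hLpos l hl).le) fun l hl => (hL l hl).2
  rw [foldl_bayesUpdate_eq_bayesUpdate_prod L hLpos hp']
  constructor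
  · rw [← bayesUpdate_div _ (pow_pos h1q _).ne', ← div_pow]
    exact bayesUpdate_anti_left hp' (List.prod_pos hLpos) hhigh
  · rw [← bayesUpdate_div _ (pow_pos hq0 _).ne', ← div_pow]
    exact bayesUpdate_anti_left hp' (pow_pos (div_pos h1q hq0) _) hlow
end

section
/- Let p₀ ∈ (0,1), let u_R, u_L ∈ (0,1], let ε ∈ (0,1], and let q ∈ [1/2, 1). Then there exists C > 0 such that for every c ∈ (0, C] and every n ∈ ℕ, both of the following inequalities hold: (a) p₀·u_R·(p₀·qⁿ)/(p₀·qⁿ + (1−p₀)·(1−q)ⁿ) − c·n ≤ p₀·u_R + (1−p₀)·u_L − c/ε; and (b) (1−p₀)·u_L·(1 − (p₀·(1−q)ⁿ)/(p₀·(1−q)ⁿ + (1−p₀)·qⁿ)) − c·n ≤ p₀·u_R + (1−p₀)·u_L − c/ε. -/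
/-! Both posterior beliefs lie in `[0, 1]`, so a strategy that never consults the revealing
consultant earns at most the payoff `p₀ u_R` or `(1 - p₀) u_L` of a single correct investment.
Consulting the revealing consultant secures both, at an expected cost of at most `c / ε`, which
is below either payoff once `c ≤ ε · min (p₀ u_R) ((1 - p₀) u_L)`. -/

lemma div_add_le_one {a b : ℝ} (ha : 0 ≤ a) (hb : 0 ≤ b) : a / (a + b) ≤ 1 :=
  div_le_one_of_le₀ (le_add_of_nonneg_right hb) (add_nonneg ha hb)

lemma mul_sub_le_add_sub {a b x s t : ℝ} (ha : 0 ≤ a) (hx : x ≤ 1) (hs : 0 ≤ s) (ht : t ≤ b) :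
    a * x - s ≤ a + b - t := by
  have : a * x ≤ a := mul_le_of_le_one_right ha hx
  linarith

/-- The key comparison in the proof of Theorem 4.2: for sufficiently small
consultation cost `c`, the payoff of any strategy that consults only non-revealing
consultants `n` times before investing is at most the payoff
`p₀ u_R + (1-p₀) u_L - c/ε` of the strategy that consults the revealing consultant
until the state is revealed. -/
theorem small_cost_comparison (p₀ uR uL ε q : ℝ) (hp : p₀ ∈ Set.Ioo (0:ℝ) 1)
    (huR : uR ∈ Set.Ioc (0:ℝ) 1) (huL : uL ∈ Set.Ioc (0:ℝ) 1)
    (hε : ε ∈ Set.Ioc (0:ℝ) 1) (hq : q ∈ Set.Ico (1/2 : ℝ) 1) :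
    ∃ C > 0, ∀ c ∈ Set.Ioc (0:ℝ) C, ∀ n : ℕ,
      (p₀ * uR * (p₀ * q ^ n / (p₀ * q ^ n + (1 - p₀) * (1 - q) ^ n)) - c * n
          ≤ p₀ * uR + (1 - p₀) * uL - c / ε) ∧
      ((1 - p₀) * uL *
            (1 - p₀ * (1 - q) ^ n / (p₀ * (1 - q) ^ n + (1 - p₀) * q ^ n)) - c * n
          ≤ p₀ * uR + (1 - p₀) * uL - c / ε) := by
  obtain ⟨hp₀, hp₁⟩ := hp
  have hp₁' : 0 < 1 - p₀ := by linarith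
  have hq₀ : 0 ≤ q := by linarith [hq.1]
  have hq₁ : 0 ≤ 1 - q := by linarith [hq.2]
  have hR : 0 < p₀ * uR := mul_pos hp₀ huR.1
  have hL : 0 < (1 - p₀) * uL := mul_pos hp₁' huL.1
  refine ⟨ε * min (p₀ * uR) ((1 - p₀) * uL), mul_pos hε.1 (lt_min hR hL), ?_⟩
  rintro c ⟨hc, hcC⟩ n
  have hcost : c / ε ≤ min (p₀ * uR) ((1 - p₀) * uL) := (div_le_iff₀' hε.1).2 hcC
  have hcn : 0 ≤ c * n := by positivity
  constructor
  · refine mul_sub_le_add_sub hR.le ?_ hcn (hcost.trans (min_le_right _ _))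
    exact div_add_le_one (by positivity) (by positivity)
  · rw [add_comm (p₀ * uR)]
    refine mul_sub_le_add_sub hL.le ?_ hcn (hcost.trans (min_le_left _ _))
    exact sub_le_self _ (by positivity)
end
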